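/- (Theorem 2) Let U = {c^1,…,c^N} ⊆ ℝ^n and C = {ĉ^1,…,ĉ^K} ⊆ ℝ^n be finite sets of nonnegative vectors, and let α, β ≥ 0 satisfy: (i) for every i ∈ [N] there exists ĉ ∈ conv(C) with c^i ≤ α·ĉ componentwise, and (ii) for every k ∈ [K] there exists c ∈ conv(U) with ĉ^k ≤ β·c componentwise. If x̂ ∈ X minimizes max_{c ∈ C} cᵀx over X, then for every x ∈ X it holds that max_{c ∈ U} cᵀx̂ ≤ αβ · max_{c ∈ U} cᵀx; that is, an optimal solution to the robust problem with respect to C gives an αβ-approximation to the robust problem with respect to U. -/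

import Mathlib

/-!
A scenario `c` dominated by `α • d` with `d ∈ conv(C)` satisfies `cᵀx ≤ α · dᵀx ≤ α · max_{C} ·ᵀx`
for `x ≥ 0`, since a linear function attains its maximum over a convex hull at a generator.
Hence the robust objective for `U` is at most `α` times the one for `C`, which in turn is at most
`β` times the one for `U`. Chaining these with the optimality of `x̂` for `C` gives the factor `αβ`.
-/

open Finset Matrix

section RobustValue

variable {ι m : Type*} [Fintype ι] [Nonempty ι] [Fintype m]

noncomputable def robustValue (V : ι → m → ℝ) (x : m → ℝ) : ℝ :=
  univ.sup' univ_nonempty fun i => V i ⬝ᵥ x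

theorem dotProduct_le_robustValue (V : ι → m → ℝ) (x : m → ℝ) (i : ι) :
    V i ⬝ᵥ x ≤ robustValue V x :=
  le_sup' (fun i => V i ⬝ᵥ x) (mem_univ i)

theorem dotProduct_le_robustValue_of_mem_convexHull {V : ι → m → ℝ} {d : m → ℝ}
    (hd : d ∈ convexHull ℝ (Set.range V)) (x : m → ℝ) : d ⬝ᵥ x ≤ robustValue V x := by
  obtain ⟨_, ⟨i, rfl⟩, hi⟩ :=
    (((dotProductBilin ℝ ℝ).flip x).convexOn convex_univ).exists_ge_of_mem_convexHull
      (Set.subset_univ _) hd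
  exact hi.trans (dotProduct_le_robustValue V x i)

theorem robustValue_le_mul_of_dominated {κ : Type*} [Fintype κ] [Nonempty κ]
    {V : ι → m → ℝ} {W : κ → m → ℝ} {α : ℝ} {x : m → ℝ} (hα : 0 ≤ α) (hx : 0 ≤ x)
    (hdom : ∀ i, ∃ d ∈ convexHull ℝ (Set.range W), ∀ j, V i j ≤ α * d j) :
    robustValue V x ≤ α * robustValue W x := by
  refine sup'_le _ _ fun i _ => ?_
  obtain ⟨d, hd, hVd⟩ := hdom i
  calc V i ⬝ᵥ x ≤ (α • d) ⬝ᵥ x := dotProduct_le_dotProduct_of_nonneg_right hVd hx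
    _ = α * (d ⬝ᵥ x) := smul_dotProduct α d x
    _ ≤ α * robustValue W x :=
      mul_le_mul_of_nonneg_left (dotProduct_le_robustValue_of_mem_convexHull hd x) hα

end RobustValue

theorem stmt_2_general {n N K : ℕ} [NeZero N] [NeZero K]
    (c : Fin N → Fin n → ℝ)
    (chat : Fin K → Fin n → ℝ)
    (X : Set (Fin n → ℝ)) (hXnonneg : ∀ x ∈ X, ∀ j, 0 ≤ x j)
    (α β : ℝ) (hα : 0 ≤ α) (hβ : 0 ≤ β)
    (hdom : ∀ i, ∃ d ∈ convexHull ℝ (Set.range chat), ∀ j, c i j ≤ α * d j)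
    (hcov : ∀ k, ∃ c' ∈ convexHull ℝ (Set.range c), ∀ j, chat k j ≤ β * c' j)
    (xhat : Fin n → ℝ) (hxhat : xhat ∈ X)
    (hopt : ∀ x ∈ X,
      (Finset.univ.sup' Finset.univ_nonempty fun k => ∑ j, chat k j * xhat j) ≤
        Finset.univ.sup' Finset.univ_nonempty fun k => ∑ j, chat k j * x j) :
    ∀ x ∈ X,
      (Finset.univ.sup' Finset.univ_nonempty fun i => ∑ j, c i j * xhat j) ≤
        α * β * (Finset.univ.sup' Finset.univ_nonempty fun i => ∑ j, c i j * x j) := by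
  intro x hx
  change robustValue c xhat ≤ α * β * robustValue c x
  calc robustValue c xhat ≤ α * robustValue chat xhat :=
        robustValue_le_mul_of_dominated hα (hXnonneg xhat hxhat) hdom
    _ ≤ α * robustValue chat x := mul_le_mul_of_nonneg_left (hopt x hx) hα
    _ ≤ α * (β * robustValue c x) :=
        mul_le_mul_of_nonneg_left (robustValue_le_mul_of_dominated hβ (hXnonneg x hx) hcov) hα
    _ = α * β * robustValue c x := (mul_assoc α β _).symm

/-- Theorem 2: if every scenario of `U` is dominated by `α` times a point in
`conv(C)` and every scenario of `C` is dominated by `β` times a point in `conv(U)`,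
then a robust optimizer with respect to `C` is an `αβ`-approximation with respect to `U`. -/
theorem stmt_2 {n N K : ℕ} [NeZero N] [NeZero K]
    (c : Fin N → Fin n → ℝ) (hc : ∀ i j, 0 ≤ c i j)
    (chat : Fin K → Fin n → ℝ) (hchat : ∀ k j, 0 ≤ chat k j)
    (X : Set (Fin n → ℝ)) (hXnonneg : ∀ x ∈ X, ∀ j, 0 ≤ x j) (hXne : X.Nonempty)
    (α β : ℝ) (hα : 0 ≤ α) (hβ : 0 ≤ β)
    (hdom : ∀ i, ∃ d ∈ convexHull ℝ (Set.range chat), ∀ j, c i j ≤ α * d j)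
    (hcov : ∀ k, ∃ c' ∈ convexHull ℝ (Set.range c), ∀ j, chat k j ≤ β * c' j)
    (xhat : Fin n → ℝ) (hxhat : xhat ∈ X)
    (hopt : ∀ x ∈ X,
      (Finset.univ.sup' Finset.univ_nonempty fun k => ∑ j, chat k j * xhat j) ≤
        Finset.univ.sup' Finset.univ_nonempty fun k => ∑ j, chat k j * x j) :
    ∀ x ∈ X,
      (Finset.univ.sup' Finset.univ_nonempty fun i => ∑ j, c i j * xhat j) ≤
        α * β * (Finset.univ.sup' Finset.univ_nonempty fun i => ∑ j, c i j * x j) :=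
  stmt_2_general c chat X hXnonneg α β hα hβ hdom hcov xhat hxhat hopt
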